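/- arXiv:1612.05572 — 6 statements merged into one kernel-verified Lean document; each statement's English description precedes it below -/
import Mathlib

section
/- (Poisson limit of the error probability.) Let ω > 0 be a fixed real number. Then the sequence of real numbers p̃(n) = Σ_{0 ≤ i ≤ n, i odd} C(n,i) (ω²/n)ⁱ (1 − ω²/n)^{n−i} converges, as n → ∞, to e^{−ω²} · sinh(ω²) = e^{−ω²} Σ_{ℓ odd} ω^{2ℓ}/ℓ!. -/
open Finset Filter

lemma odd_binom_sum_eq (x : ℝ) (n : ℕ) :
    ∑ i ∈ (range (n + 1)).filter (fun i => Odd i),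
      (n.choose i : ℝ) * x ^ i * (1 - x) ^ (n - i)
      = ((x + (1 - x)) ^ n - ((1 - x) - x) ^ n) / 2 := by
  rw [add_pow, sub_eq_add_neg (1 - x) x,
    show ((1 - x) + -x : ℝ) = -x + (1 - x) by ring, add_pow, ← Finset.sum_sub_distrib]
  rw [← Finset.sum_filter_add_sum_filter_not (range (n + 1)) (fun i => Odd i)
    (fun i => (x ^ i * (1 - x) ^ (n - i) * (n.choose i : ℝ)
      - (-x) ^ i * (1 - x) ^ (n - i) * (n.choose i : ℝ)))]
  have h1 : ∑ i ∈ (range (n + 1)).filter (fun i => Odd i),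
      (x ^ i * (1 - x) ^ (n - i) * (n.choose i : ℝ)
        - (-x) ^ i * (1 - x) ^ (n - i) * (n.choose i : ℝ))
      = ∑ i ∈ (range (n + 1)).filter (fun i => Odd i),
        2 * ((n.choose i : ℝ) * x ^ i * (1 - x) ^ (n - i)) := by
    refine Finset.sum_congr rfl fun i hi => ?_
    have hodd : Odd i := (Finset.mem_filter.mp hi).2
    rw [hodd.neg_pow]
    ring
  have h2 : ∑ i ∈ (range (n + 1)).filter (fun i => ¬ Odd i),
      (x ^ i * (1 - x) ^ (n - i) * (n.choose i : ℝ)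
        - (-x) ^ i * (1 - x) ^ (n - i) * (n.choose i : ℝ)) = 0 := by
    refine Finset.sum_eq_zero fun i hi => ?_
    have heven : Even i := Nat.not_odd_iff_even.mp (Finset.mem_filter.mp hi).2
    rw [heven.neg_pow]
    ring
  rw [h1, h2, ← Finset.mul_sum]
  ring

/-- Poisson limit: for fixed ω > 0, the sequence
`p̃(n) = Σ_{0 ≤ i ≤ n, i odd} C(n,i) (ω²/n)^i (1 − ω²/n)^{n−i}` converges to
`e^{−ω²} · sinh(ω²)` as n → ∞. -/
theorem poisson_limit_odd_binomial (ω : ℝ) (hω : 0 < ω) :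
    Tendsto (fun n : ℕ =>
        ∑ i ∈ (range (n + 1)).filter (fun i => Odd i),
          (n.choose i : ℝ) * (ω ^ 2 / n) ^ i * (1 - ω ^ 2 / n) ^ (n - i))
      atTop (nhds (Real.exp (-ω ^ 2) * Real.sinh (ω ^ 2))) := by
  have hfun : ∀ n : ℕ,
      ∑ i ∈ (range (n + 1)).filter (fun i => Odd i),
        (n.choose i : ℝ) * (ω ^ 2 / n) ^ i * (1 - ω ^ 2 / n) ^ (n - i)
      = (1 - (1 + (-(2 * ω ^ 2)) / n) ^ n) / 2 := by
    intro n
    rw [odd_binom_sum_eq (ω ^ 2 / n) n]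
    have : ω ^ 2 / n + (1 - ω ^ 2 / n) = 1 := by ring
    rw [this, one_pow]
    congr 2
    ring
  have hval : Real.exp (-ω ^ 2) * Real.sinh (ω ^ 2)
      = (1 - Real.exp (-(2 * ω ^ 2))) / 2 := by
    rw [Real.sinh_eq]
    rw [show Real.exp (-ω ^ 2) * ((Real.exp (ω ^ 2) - Real.exp (-ω ^ 2)) / 2)
        = (Real.exp (-ω ^ 2) * Real.exp (ω ^ 2) - Real.exp (-ω ^ 2) * Real.exp (-ω ^ 2)) / 2
        by ring, ← Real.exp_add, ← Real.exp_add]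
    rw [show (-ω ^ 2 + ω ^ 2 : ℝ) = 0 by ring, show (-ω ^ 2 + -ω ^ 2 : ℝ) = -(2 * ω ^ 2) by ring,
      Real.exp_zero]
  rw [hval]
  simp only [hfun]
  exact ((Real.tendsto_one_add_div_pow_exp (-(2 * ω ^ 2))).const_sub 1).div_const 2
end

section
/- (Submultiplicativity of the rank weight under the cyclic product.) Let K be a field and L a finite-dimensional field extension of K, and let · denote the cyclic product on Lⁿ. For all x, y ∈ Lⁿ, the support of x·y is contained in the K-subspace of L spanned by the products {a·b : a ∈ Supp(x), b ∈ Supp(y)}; consequently ω(x·y) ≤ ω(x) · ω(y). -/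
/-! Every coordinate `∑ᵢ xᵢ y_{k-i}` of `x·y` lies in the product subspace `Supp(x) * Supp(y)`,
and that subspace is the image of `Supp(x) ⊗ Supp(y)` under multiplication, so its dimension is
at most `ω(x) ω(y)`. -/

/-- The rank support of a vector `x ∈ Lⁿ`: the `K`-subspace of `L` spanned by its
coordinates. -/
def rankSupp (K : Type*) {L : Type*} [Field K] [Field L] [Algebra K L]
    {ι : Type*} (x : ι → L) : Submodule K L :=
  Submodule.span K (Set.range x)

/-- The rank weight of a vector `x ∈ Lⁿ`: the `K`-dimension of its support. -/
noncomputable def rankWeight (K : Type*) {L : Type*} [Field K] [Field L] [Algebra K L]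
    {ι : Type*} (x : ι → L) : ℕ :=
  Module.finrank K (rankSupp K x)

/-- The cyclic product of two vectors indexed by `ZMod n`:
`(x · y)_k = Σ_{i+j ≡ k mod n} xᵢ yⱼ`. -/
def cycProd {n : ℕ} [NeZero n] {F : Type*} [CommRing F] (x y : ZMod n → F) :
    ZMod n → F := fun k => ∑ i : ZMod n, x i * y (k - i)

instance Submodule.finiteDimensional_mul {K A : Type*} [Field K] [Ring A] [Algebra K A]
    (p q : Submodule K A) [FiniteDimensional K p] [FiniteDimensional K q] :
    FiniteDimensional K ↥(p * q) :=
  Module.Finite.iff_fg.mpr <|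
    (Module.Finite.iff_fg.mp inferInstance).mul (Module.Finite.iff_fg.mp inferInstance)

theorem Submodule.finrank_mul_le {K A : Type*} [Field K] [Ring A] [Algebra K A]
    (p q : Submodule K A) [FiniteDimensional K p] [FiniteDimensional K q] :
    Module.finrank K ↥(p * q) ≤ Module.finrank K p * Module.finrank K q := by
  rw [← Submodule.mulMap_range, ← Module.finrank_tensorProduct]
  exact LinearMap.finrank_range_le _

theorem Submodule.span_setOf_mul_eq_mul {K A : Type*} [CommSemiring K] [Semiring A]
    [Algebra K A] (p q : Submodule K A) :
    Submodule.span K {z : A | ∃ a ∈ p, ∃ b ∈ q, z = a * b} = p * q := by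
  rw [Submodule.mul_eq_span_mul_set]
  congr 1
  ext z
  simp only [Set.mem_ofPred_eq, Set.mem_mul, SetLike.mem_coe, eq_comm]

instance rankSupp.finiteDimensional (K : Type*) {L : Type*} [Field K] [Field L] [Algebra K L]
    {ι : Type*} [Finite ι] (x : ι → L) : FiniteDimensional K (rankSupp K x) :=
  FiniteDimensional.span_of_finite K (Set.finite_range x)

theorem rankSupp_cycProd_le_mul (K : Type*) {L : Type*} [Field K] [Field L] [Algebra K L]
    {n : ℕ} [NeZero n] (x y : ZMod n → L) :
    rankSupp K (cycProd x y) ≤ rankSupp K x * rankSupp K y := by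
  refine Submodule.span_le.mpr (Set.range_subset_iff.mpr fun k => ?_)
  exact Submodule.sum_mem _ fun i _ => Submodule.mul_mem_mul
    (Submodule.subset_span ⟨i, rfl⟩) (Submodule.subset_span ⟨k - i, rfl⟩)

theorem rankWeight_cycProd_le_general (K L : Type*) [Field K] [Field L] [Algebra K L]
    {n : ℕ} [NeZero n] (x y : ZMod n → L) :
    rankSupp K (cycProd x y)
        ≤ Submodule.span K {z : L | ∃ a ∈ rankSupp K x, ∃ b ∈ rankSupp K y, z = a * b} ∧
    rankWeight K (cycProd x y) ≤ rankWeight K x * rankWeight K y := by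
  rw [Submodule.span_setOf_mul_eq_mul]
  exact ⟨rankSupp_cycProd_le_mul K x y,
    (Submodule.finrank_mono (rankSupp_cycProd_le_mul K x y)).trans
      (Submodule.finrank_mul_le _ _)⟩

/-- submultiplicativity of the rank weight under the cyclic product:
`Supp(x·y)` is contained in the `K`-span of `{a·b : a ∈ Supp(x), b ∈ Supp(y)}`;
consequently `ω(x·y) ≤ ω(x)·ω(y)`. -/
theorem rankWeight_cycProd_le (K L : Type*) [Field K] [Field L] [Algebra K L]
    [FiniteDimensional K L] {n : ℕ} [NeZero n] (x y : ZMod n → L) :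
    rankSupp K (cycProd x y)
        ≤ Submodule.span K {z : L | ∃ a ∈ rankSupp K x, ∃ b ∈ rankSupp K y, z = a * b} ∧
    rankWeight K (cycProd x y) ≤ rankWeight K x * rankWeight K y :=
  rankWeight_cycProd_le_general K L x y
end

section
/- (Rank weight bound on the RQC error term with shared supports.) Let K be a field and L a finite-dimensional field extension of K, and let · denote the cyclic product on Lⁿ. Let x, y, r₁, r₂ ∈ Lⁿ with Supp(x) = Supp(y) and Supp(r₁) = Supp(r₂). Then ω(x·r₂ − r₁·y) ≤ ω(x) · ω(r₁). -/
open Module Submodule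

lemma finrank_submodule_mul_le {K L : Type*} [Field K] [Field L] [Algebra K L]
    [FiniteDimensional K L] (M N : Submodule K L) :
    finrank K ↥(M * N) ≤ finrank K M * finrank K N := by
  classical
  set m := finrank K M with hm
  set k := finrank K N with hk
  let b : Basis (Fin m) K M := finBasis K M
  let c : Basis (Fin k) K N := finBasis K N
  have hM : M ≤ span K (Set.range fun i => (b i : L)) := by
    intro a ha
    have : (⟨a, ha⟩ : M) ∈ span K (Set.range b) := by rw [b.span_eq]; trivial
    have h2 := Submodule.map_mono (f := M.subtype) (le_of_eq rfl)
      (Submodule.mem_map_of_mem (f := M.subtype) this)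
    rw [Submodule.map_span, ← Set.range_comp] at h2
    exact h2
  have hN : N ≤ span K (Set.range fun j => (c j : L)) := by
    intro a ha
    have : (⟨a, ha⟩ : N) ∈ span K (Set.range c) := by rw [c.span_eq]; trivial
    have h2 := Submodule.map_mono (f := N.subtype) (le_of_eq rfl)
      (Submodule.mem_map_of_mem (f := N.subtype) this)
    rw [Submodule.map_span, ← Set.range_comp] at h2
    exact h2
  have h : M * N ≤ span K (Set.range fun p : Fin m × Fin k => (b p.1 : L) * (c p.2 : L)) := by
    refine mul_le.2 fun a ha d hd => ?_
    have := mul_mem_mul (hM ha) (hN hd)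
    rw [span_mul_span] at this
    refine span_le.2 ?_ this
    rintro _ ⟨_, ⟨i, rfl⟩, _, ⟨j, rfl⟩, rfl⟩
    exact subset_span ⟨(i, j), rfl⟩
  calc finrank K ↥(M * N) ≤ finrank K ↥(span K (Set.range fun p : Fin m × Fin k =>
        (b p.1 : L) * (c p.2 : L))) := Submodule.finrank_mono h
    _ ≤ Fintype.card (Fin m × Fin k) := finrank_range_le_card _
    _ = m * k := by simp

/-- STATEMENT 10 (rank weight bound on the RQC error term with shared supports):
if `Supp(x) = Supp(y)` and `Supp(r₁) = Supp(r₂)`, then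
`ω(x·r₂ − r₁·y) ≤ ω(x)·ω(r₁)`. -/theorem rankWeight_error_shared_supports (K L : Type*) [Field K] [Field L] [Algebra K L]
    [FiniteDimensional K L] {n : ℕ} [NeZero n] (x y r₁ r₂ : ZMod n → L)
    (hxy : rankSupp K x = rankSupp K y) (hr : rankSupp K r₁ = rankSupp K r₂) :
    rankWeight K (cycProd x r₂ - cycProd r₁ y) ≤ rankWeight K x * rankWeight K r₁ := by
  have hsupp : rankSupp K (cycProd x r₂ - cycProd r₁ y) ≤ rankSupp K x * rankSupp K r₁ := by
    refine span_le.2 ?_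
    rintro _ ⟨k, rfl⟩
    show (cycProd x r₂ - cycProd r₁ y) k ∈ _
    have h1 : cycProd x r₂ k ∈ rankSupp K x * rankSupp K r₁ := by
      refine Submodule.sum_mem _ fun i _ => mul_mem_mul (subset_span ⟨i, rfl⟩) ?_
      rw [hr]
      exact subset_span ⟨k - i, rfl⟩
    have h2 : cycProd r₁ y k ∈ rankSupp K x * rankSupp K r₁ := by
      refine Submodule.sum_mem _ fun i _ => ?_
      rw [mul_comm (r₁ i)]
      refine mul_mem_mul ?_ (subset_span ⟨i, rfl⟩)
      rw [hxy]
      exact subset_span ⟨k - i, rfl⟩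
    exact sub_mem h1 h2
  exact (Submodule.finrank_mono hsupp).trans (finrank_submodule_mul_le _ _)
end

section
/- (Singleton bound for rank metric codes.) Let K be a field and L a finite-dimensional field extension of K. Let C ⊆ Lⁿ be an L-linear subspace (a rank metric code of length n) with dim_L C = k ≥ 1. Then there exists a nonzero codeword c ∈ C with rank weight ω(c) ≤ n − k + 1. -/
/-- Singleton bound for rank metric codes: an `L`-linear code
`C ⊆ Lⁿ` of dimension `k ≥ 1` contains a nonzero codeword of rank weight at most
`n − k + 1`. -/

theorem rank_singleton_bound (K L : Type*) [Field K] [Field L] [Algebra K L]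
    [FiniteDimensional K L] {n k : ℕ} (hk : 1 ≤ k)
    (C : Submodule L (Fin n → L)) (hdim : Module.finrank L C = k) :
    ∃ c ∈ C, c ≠ 0 ∧ rankWeight K c ≤ n - k + 1 := by
  classical
  have hkn : k ≤ n := by
    have h := Submodule.finrank_le C
    rwa [hdim, Module.finrank_fin_fun] at h
  set m := k - 1 with hm
  have hmn : m ≤ n := by omega
  let π : (Fin n → L) →ₗ[L] (Fin m → L) := LinearMap.funLeft L L (Fin.castLE hmn)
  let φ := π.comp C.subtype
  have hker : LinearMap.ker φ ≠ ⊥ := by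
    intro hbot
    have hinj : Function.Injective φ := LinearMap.ker_eq_bot.mp hbot
    have := LinearMap.finrank_le_finrank_of_injective hinj
    rw [hdim, Module.finrank_fin_fun] at this
    omega
  obtain ⟨c, hcker, hc0⟩ := Submodule.exists_mem_ne_zero_of_ne_bot hker
  refine ⟨(c : Fin n → L), c.2, by simpa using hc0, ?_⟩
  have hzero : ∀ i : Fin n, (i : ℕ) < m → (c : Fin n → L) i = 0 := by
    intro i hi
    have h1 : φ c = 0 := hcker
    have h2 := congrFun h1 ⟨(i : ℕ), hi⟩
    have h3 : Fin.castLE hmn ⟨(i : ℕ), hi⟩ = i := by ext; rfl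
    simpa [φ, π, LinearMap.funLeft, h3] using h2
  have hcardfilter : (Finset.univ.filter (fun i : Fin n => m ≤ (i : ℕ))).card = n - m := by
    rw [Finset.card_filter, Fin.sum_univ_eq_sum_range (fun i => if m ≤ i then 1 else 0),
      ← Finset.card_filter, Finset.range_eq_Ico, Finset.Ico_filter_le_of_left_le (Nat.zero_le m),
      Nat.card_Ico]
  have hcard : ((Finset.univ.filter (fun i : Fin n => m ≤ (i : ℕ))).image (c : Fin n → L)).card
      ≤ n - m := hcardfilter ▸ Finset.card_image_le
  set t : Finset L := (Finset.univ.filter (fun i : Fin n => m ≤ (i : ℕ))).image (c : Fin n → L)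
    with ht
  have hsub : rankSupp K (c : Fin n → L) ≤ Submodule.span K (insert (0:L) (t : Set L)) := by
    apply Submodule.span_mono
    rintro x ⟨i, rfl⟩
    by_cases hi : (i : ℕ) < m
    · left; exact (hzero i hi).symm ▸ rfl
    · right
      exact Finset.mem_coe.mpr (Finset.mem_image.mpr ⟨i, Finset.mem_filter.mpr
        ⟨Finset.mem_univ i, le_of_not_gt hi⟩, rfl⟩)
  have hspan : Submodule.span K (insert (0:L) (t : Set L)) = Submodule.span K (t : Set L) := by
    simp
  have hle : rankWeight K (c : Fin n → L) ≤ t.card := by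
    calc rankWeight K (c : Fin n → L)
        ≤ Module.finrank K (Submodule.span K (t : Set L)) := by
          rw [← hspan]; exact Submodule.finrank_mono hsub
      _ ≤ t.card := finrank_span_finset_le_card (R := K) t
  omega
end

section
/- (Refined Singleton bound for rank metric codes when n > m.) Let K be a field and L a field extension of K with m = dim_K L finite. Let C ⊆ Lⁿ be an L-linear subspace with dim_L C = k ≥ 1, and assume n > m. Then there exists a nonzero codeword c ∈ C with rank weight ω(c) ≤ 1 + ⌊(n − k)·m / n⌋. -/
/-- The `K`-submodule of `Fin n → L` of vectors all of whose coordinates lie in `V`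
is linearly equivalent to `Fin n → V`. -/
def piSubEquiv (K L : Type*) [Field K] [Field L] [Algebra K L] (n : ℕ)
    (V : Submodule K L) :
    (Submodule.pi (Set.univ : Set (Fin n)) fun _ => V) ≃ₗ[K] (Fin n → V) where
  toFun x := fun i => ⟨x.1 i, x.2 i (Set.mem_univ i)⟩
  map_add' := by intros; rfl
  map_smul' := by intros; rfl
  invFun y := ⟨fun i => (y i).1, fun i _ => (y i).2⟩
  left_inv := by intro x; rfl
  right_inv := by intro y; rfl

set_option maxHeartbeats 1000000 in
/-- refined Singleton bound for rank metric codes when `n > m`: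
if `m = dim_K L` and `n > m`, then an `L`-linear code `C ⊆ Lⁿ` of dimension `k ≥ 1`
contains a nonzero codeword of rank weight at most `1 + ⌊(n − k)·m / n⌋`. -/
theorem rank_singleton_bound_refined (K L : Type*) [Field K] [Field L] [Algebra K L]
    [FiniteDimensional K L] {n k m : ℕ} (hm : Module.finrank K L = m) (hnm : m < n)
    (hk : 1 ≤ k) (C : Submodule L (Fin n → L)) (hdim : Module.finrank L C = k) :
    ∃ c ∈ C, c ≠ 0 ∧ rankWeight K c ≤ 1 + (n - k) * m / n := by
  have hm1 : 1 ≤ m := hm ▸ Module.finrank_pos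
  have hn0 : 0 < n := lt_of_le_of_lt (Nat.zero_le m) hnm
  set v : ℕ := 1 + (n - k) * m / n with hv
  -- `k ≤ n`
  have hkn : k ≤ n := by
    have := Submodule.finrank_le C
    rwa [hdim, Module.finrank_fintype_fun_eq_card, Fintype.card_fin] at this
  -- `v ≤ m`
  have hvm : v ≤ m := by
    have hlt : (n - k) * m / n < m := by
      rw [Nat.div_lt_iff_lt_mul hn0]
      calc (n - k) * m < n * m := by
            apply Nat.mul_lt_mul_of_lt_of_le _ le_rfl hm1
            omega
        _ = m * n := Nat.mul_comm _ _
    omega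
  -- `(n-k)*m < n*v`
  have hnv : (n - k) * m < n * v := by
    have h1 : (n - k) * m = n * ((n - k) * m / n) + (n - k) * m % n := (Nat.div_add_mod _ _).symm
    have h2 : (n - k) * m % n < n := Nat.mod_lt _ hn0
    have : n * v = n * ((n - k) * m / n) + n := by rw [hv]; ring
    omega
  -- construct a `K`-subspace `V ≤ L` with `finrank K V = v`
  have hvm' : v ≤ Module.finrank K L := hm ▸ hvm
  let b := Module.finBasis K L
  let f : Fin v → L := fun i => b (Fin.castLE hvm' i)
  have hf : LinearIndependent K f :=
    b.linearIndependent.comp _ (Fin.castLE_injective hvm')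
  set V : Submodule K L := Submodule.span K (Set.range f) with hV
  have hVdim : Module.finrank K V = v := by
    rw [hV, finrank_span_eq_card hf, Fintype.card_fin]
  -- the anticode `A`
  set A : Submodule K (Fin n → L) :=
    Submodule.pi (Set.univ : Set (Fin n)) fun _ => V with hA
  have hAdim : Module.finrank K A = n * v := by
    rw [(piSubEquiv K L n V).finrank_eq, Module.finrank_pi_fintype,
      Finset.sum_const, Finset.card_univ, Fintype.card_fin, smul_eq_mul, hVdim]
  -- the code as a `K`-subspace
  set C' : Submodule K (Fin n → L) := C.restrictScalars K with hC'
  have hC'dim : Module.finrank K C' = k * m := by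
    rw [hC', (((Submodule.restrictScalarsEquiv K L (Fin n → L) C).restrictScalars K)).finrank_eq]
    have := Module.finrank_mul_finrank K L C
    rw [hm, hdim] at this
    rw [← this, Nat.mul_comm]
  -- the ambient dimension
  have hamb : Module.finrank K (Fin n → L) = n * m := by
    rw [Module.finrank_pi_fintype, Finset.sum_const, Finset.card_univ,
      Fintype.card_fin, smul_eq_mul, hm]
  -- `C' ⊓ A ≠ ⊥`
  have hbot : C' ⊓ A ≠ ⊥ := by
    intro hb
    have hsum := Submodule.finrank_sup_add_finrank_inf_eq C' A
    rw [hb, finrank_bot, Nat.add_zero, hC'dim, hAdim] at hsum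
    have hle : Module.finrank K ↥(C' ⊔ A) ≤ n * m := by
      have := Submodule.finrank_le (C' ⊔ A)
      rwa [hamb] at this
    have heq : k * m + (n - k) * m = n * m := by
      rw [← Nat.add_mul]; congr 1; omega
    omega
  obtain ⟨c, hc, hc0⟩ := Submodule.exists_mem_ne_zero_of_ne_bot hbot
  refine ⟨c, hc.1, hc0, ?_⟩
  have hsupp : rankSupp K c ≤ V := by
    rw [rankSupp, Submodule.span_le]
    rintro x ⟨i, rfl⟩
    exact hc.2 i (Set.mem_univ i)
  calc rankWeight K c ≤ Module.finrank K V := Submodule.finrank_mono hsupp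
    _ = v := hVdim
end

section
/- (Minimum distance of the tensor product code.) Let F be a field and let C₁ ⊆ F^{n₁} and C₂ ⊆ F^{n₂} be nonzero linear subspaces. Let d₁ (resp. d₂) be the minimum number of nonzero coordinates of a nonzero codeword of C₁ (resp. C₂). Let T be the set of n₂ × n₁ matrices over F whose rows all belong to C₁ and whose columns all belong to C₂. Then: (a) every nonzero matrix M ∈ T has at least d₁·d₂ nonzero entries; and (b) there exists a nonzero matrix M ∈ T with exactly d₁·d₂ nonzero entries. Hence the minimum Hamming weight of a nonzero element of T (entries counted over all positions) equals d₁·d₂. -/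
lemma tensor_hammingNorm_aux {α β F : Type*} [Fintype α] [Fintype β] [DecidableEq F]
    [MulZeroClass F] [NoZeroDivisors F] (f : α → F) (g : β → F) :
    hammingNorm (fun p : α × β => f p.1 * g p.2) = hammingNorm f * hammingNorm g := by
  classical
  simp only [hammingNorm]
  rw [← Finset.card_product]
  congr 1
  ext p
  simp [mul_ne_zero_iff]

/-- minimum distance of the tensor product code: if `d₁` (resp. `d₂`) is the
minimum Hamming weight of a nonzero codeword of `C₁` (resp. `C₂`), then every nonzero matrix
of the tensor product code `T` has at least `d₁·d₂` nonzero entries, some nonzero matrix of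
`T` has exactly `d₁·d₂` nonzero entries, and hence the minimum Hamming weight of a nonzero
element of `T` equals `d₁·d₂`. -/
theorem tensor_product_code_min_dist (F : Type*) [Field F] [DecidableEq F]
    {n₁ n₂ d₁ d₂ : ℕ}
    (C₁ : Submodule F (Fin n₁ → F)) (C₂ : Submodule F (Fin n₂ → F))
    (hC₁ : C₁ ≠ ⊥) (hC₂ : C₂ ≠ ⊥)
    (hd₁ : IsLeast {w : ℕ | ∃ c ∈ C₁, c ≠ 0 ∧ hammingNorm c = w} d₁)
    (hd₂ : IsLeast {w : ℕ | ∃ c ∈ C₂, c ≠ 0 ∧ hammingNorm c = w} d₂) :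
    (∀ M : Matrix (Fin n₂) (Fin n₁) F,
        (∀ i, (fun j => M i j) ∈ C₁) → (∀ j, (fun i => M i j) ∈ C₂) → M ≠ 0 →
        d₁ * d₂ ≤ hammingNorm (fun p : Fin n₂ × Fin n₁ => M p.1 p.2)) ∧
    (∃ M : Matrix (Fin n₂) (Fin n₁) F,
        (∀ i, (fun j => M i j) ∈ C₁) ∧ (∀ j, (fun i => M i j) ∈ C₂) ∧ M ≠ 0 ∧
        hammingNorm (fun p : Fin n₂ × Fin n₁ => M p.1 p.2) = d₁ * d₂) ∧
    IsLeast {w : ℕ | ∃ M : Matrix (Fin n₂) (Fin n₁) F,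
        (∀ i, (fun j => M i j) ∈ C₁) ∧ (∀ j, (fun i => M i j) ∈ C₂) ∧ M ≠ 0 ∧
        hammingNorm (fun p : Fin n₂ × Fin n₁ => M p.1 p.2) = w} (d₁ * d₂) := by
  classical
  obtain ⟨⟨c₁, hc₁, hc₁0, hw₁⟩, hlb₁⟩ := hd₁
  obtain ⟨⟨c₂, hc₂, hc₂0, hw₂⟩, hlb₂⟩ := hd₂
  have lower : ∀ M : Matrix (Fin n₂) (Fin n₁) F,
      (∀ i, (fun j => M i j) ∈ C₁) → (∀ j, (fun i => M i j) ∈ C₂) → M ≠ 0 →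
      d₁ * d₂ ≤ hammingNorm (fun p : Fin n₂ × Fin n₁ => M p.1 p.2) := by
    intro M hrow hcol hM
    obtain ⟨i₀, j₀, h0⟩ : ∃ i j, M i j ≠ 0 := by
      by_contra h; push_neg at h
      exact hM (by ext i j; exact h i j)
    set J : Finset (Fin n₁) := Finset.univ.filter (fun j => M i₀ j ≠ 0) with hJ
    have hJcard : d₁ ≤ J.card :=
      hlb₁ ⟨fun j => M i₀ j, hrow i₀, fun h => h0 (congrFun h j₀), rfl⟩
    have hcolcard : ∀ j ∈ J, d₂ ≤ (Finset.univ.filter (fun i => M i j ≠ 0)).card := by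
      intro j hj
      have hjne : M i₀ j ≠ 0 := (Finset.mem_filter.mp hj).2
      exact hlb₂ ⟨fun i => M i j, hcol j, fun h => hjne (congrFun h i₀), rfl⟩
    have key : hammingNorm (fun p : Fin n₂ × Fin n₁ => M p.1 p.2)
        = ∑ j : Fin n₁, (Finset.univ.filter (fun i => M i j ≠ 0)).card := by
      simp only [hammingNorm]
      rw [Finset.card_eq_sum_card_fiberwise (f := Prod.snd) (t := Finset.univ)
        (fun x _ => Finset.mem_univ _)]
      refine Finset.sum_congr rfl fun j _ => ?_
      refine Finset.card_bij (fun p _ => p.1) ?_ ?_ ?_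
      · intro p hp
        simp only [Finset.mem_filter, Finset.mem_univ, true_and] at hp ⊢
        rw [← hp.2]; exact hp.1
      · intro p hp q hq h
        simp only [Finset.mem_filter] at hp hq
        exact Prod.ext h (hp.2.trans hq.2.symm)
      · intro i hi
        simp only [Finset.mem_filter, Finset.mem_univ, true_and] at hi ⊢
        exact ⟨(i, j), ⟨hi, rfl⟩, rfl⟩
    rw [key]
    calc d₁ * d₂ ≤ J.card * d₂ := Nat.mul_le_mul_right _ hJcard
      _ = ∑ _j ∈ J, d₂ := by rw [Finset.sum_const, smul_eq_mul]
      _ ≤ ∑ j ∈ J, (Finset.univ.filter (fun i => M i j ≠ 0)).card :=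
          Finset.sum_le_sum hcolcard
      _ ≤ ∑ j : Fin n₁, (Finset.univ.filter (fun i => M i j ≠ 0)).card :=
          Finset.sum_le_sum_of_subset (Finset.subset_univ _)
  obtain ⟨j₁, hj₁'⟩ := Function.ne_iff.mp hc₁0
  obtain ⟨i₂, hi₂'⟩ := Function.ne_iff.mp hc₂0
  have hj₁ : c₁ j₁ ≠ 0 := by simpa using hj₁'
  have hi₂ : c₂ i₂ ≠ 0 := by simpa using hi₂'
  have exact_M : ∃ M : Matrix (Fin n₂) (Fin n₁) F,
      (∀ i, (fun j => M i j) ∈ C₁) ∧ (∀ j, (fun i => M i j) ∈ C₂) ∧ M ≠ 0 ∧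
      hammingNorm (fun p : Fin n₂ × Fin n₁ => M p.1 p.2) = d₁ * d₂ := by
    refine ⟨fun i j => c₂ i * c₁ j, ?_, ?_, ?_, ?_⟩
    · intro i
      have : (fun j => c₂ i * c₁ j) = c₂ i • c₁ := by ext j; simp [Pi.smul_apply, smul_eq_mul]
      rw [this]; exact C₁.smul_mem _ hc₁
    · intro j
      have : (fun i => c₂ i * c₁ j) = c₁ j • c₂ := by
        ext i; simp [Pi.smul_apply, smul_eq_mul, mul_comm]
      rw [this]; exact C₂.smul_mem _ hc₂
    · intro h
      exact mul_ne_zero hi₂ hj₁ (by simpa using congrFun (congrFun h i₂) j₁)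
    · rw [tensor_hammingNorm_aux, hw₂, hw₁, mul_comm]
  refine ⟨lower, exact_M, ?_, ?_⟩
  · obtain ⟨M, h1, h2, h3, h4⟩ := exact_M
    exact ⟨M, h1, h2, h3, h4⟩
  · rintro w ⟨M, h1, h2, h3, rfl⟩
    exact lower M h1 h2 h3
end
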